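/- The function F(t) = −[sin²t (3cos²t − 14cos t + 43)(9cos²t − 58cos t + 529)(2cos²t − 9cos t + 22)]/230400 has Taylor expansion F(t) = −t²[1 − (57/4480) t⁶ + (1649/737280) t⁸ + O(t⁹)] about t = 0; in particular F(t) + t² = O(t⁸), so Shen's scheme is sixth-order accurate. -/

import Mathlib

open Real Filter Asymptotics Topology

/-- Fourier symbol of Shen's scheme. -/
noncomputable def shenSymbol (t : ℝ) : ℝ :=
  -(Real.sin t ^ 2 * (3 * Real.cos t ^ 2 - 14 * Real.cos t + 43)
      * (9 * Real.cos t ^ 2 - 58 * Real.cos t + 529)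
      * (2 * Real.cos t ^ 2 - 9 * Real.cos t + 22)) / 230400

/-- degree-10 Taylor polynomial of cosine -/
noncomputable def cosP (x : ℝ) : ℝ :=
  1 - x^2/2 + x^4/24 - x^6/720 + x^8/40320 - x^10/3628800

open Complex Finset in
lemma cos_taylor (x : ℝ) (hx : |x| ≤ 1) : |Real.cos x - cosP x| ≤ |x| ^ 11 := by
  rw [cosP]
  set T : ℝ := 1 - x^2/2 + x^4/24 - x^6/720 + x^8/40320 - x^10/3628800 with hT
  set S1 : ℂ := ∑ m ∈ range 12, (x*I:ℂ) ^ m / m.factorial with hS1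
  set S2 : ℂ := ∑ m ∈ range 12, (-(x*I):ℂ) ^ m / m.factorial with hS2
  have hz : ‖x * I‖ ≤ 1 := by simpa using hx
  have hz' : ‖-(x * I)‖ ≤ 1 := by simpa using hx
  have h1 := Complex.exp_bound hz (n := 12) (by norm_num)
  have h2 := Complex.exp_bound hz' (n := 12) (by norm_num)
  have hcos : Complex.cos x = (Complex.exp (x*I) + Complex.exp (-(x*I)))/2 := by
    rw [Complex.exp_mul_I, ← neg_mul, Complex.exp_mul_I, Complex.cos_neg, Complex.sin_neg]
    ring
  have hI2 : (I:ℂ)^2 = -1 := by simp [pow_succ]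
  have hI4 : (I:ℂ)^4 = 1 := by simp [pow_succ]
  have hI6 : (I:ℂ)^6 = -1 := by simp [pow_succ]
  have hI8 : (I:ℂ)^8 = 1 := by simp [pow_succ]
  have hI10 : (I:ℂ)^10 = -1 := by simp [pow_succ]
  have hsum : (S1 + S2) / 2 = (T : ℂ) := by
    simp only [hS1, hS2, Finset.sum_range_succ, hT, Nat.factorial]
    push_cast
    ring_nf
    rw [hI2, hI4, hI6, hI8, hI10]
    ring
  have habs : ‖(x:ℂ)*I‖ = |x| := by simp
  have habs' : ‖-((x:ℂ)*I)‖ = |x| := by simp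
  rw [habs] at h1; rw [habs'] at h2
  set c : ℝ := (13:ℝ) * ((Nat.factorial 12 : ℝ) * 12)⁻¹ with hc
  have hb : c ≤ 1 := by norm_num [hc, Nat.factorial]
  have hc0 : 0 ≤ c := by positivity
  have h1' : ‖Complex.exp (x*I) - S1‖ ≤ |x|^12 * c := by
    convert h1 using 3 <;> norm_num
  have h2' : ‖Complex.exp (-(x*I)) - S2‖ ≤ |x|^12 * c := by
    convert h2 using 3 <;> norm_num
  have h12 : |x|^12 ≤ |x|^11 := pow_le_pow_of_le_one (abs_nonneg x) hx (by norm_num)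
  have key : ‖Complex.cos x - (T:ℂ)‖ ≤ |x|^11 := by
    have heq : Complex.cos x - (T:ℂ)
        = (Complex.exp (x*I) - S1)/2 + (Complex.exp (-(x*I)) - S2)/2 := by
      rw [hcos, ← hsum]; ring
    rw [heq]
    calc ‖(Complex.exp (x*I) - S1)/2 + (Complex.exp (-(x*I)) - S2)/2‖
        ≤ ‖(Complex.exp (x*I) - S1)/2‖
          + ‖(Complex.exp (-(x*I)) - S2)/2‖ := norm_add_le _ _
      _ = (‖Complex.exp (x*I) - S1‖
          + ‖Complex.exp (-(x*I)) - S2‖)/2 := by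
            rw [norm_div, norm_div]; norm_num; ring
      _ ≤ (|x|^12 * c + |x|^12 * c)/2 := by gcongr
      _ = |x|^12 * c := by ring
      _ ≤ |x|^11 * 1 := mul_le_mul h12 hb hc0 (by positivity)
      _ = |x|^11 := by ring
  have hre : ((|Real.cos x - T| : ℝ)) = ‖Complex.cos x - (T:ℂ)‖ := by
    rw [← Real.norm_eq_abs, ← Complex.norm_real]
    push_cast [Complex.ofReal_cos]
    ring_nf
  rw [hre]
  exact key

lemma shen_fourier (t : ℝ) : shenSymbol t =
    -704663/589824 + (31895/65536) * Real.cos t + (333251/307200) * Real.cos (2*t)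
    - (774123/1638400) * Real.cos (3*t) + (26711/245760) * Real.cos (4*t)
    - (2779/196608) * Real.cos (5*t) + (223/184320) * Real.cos (6*t)
    - (281/4915200) * Real.cos (7*t) + (3/1638400) * Real.cos (8*t) := by
  have cheb : ∀ a b : ℝ, Real.cos (a + b) = 2 * Real.cos a * Real.cos b - Real.cos (a - b) :=
    fun a b => by rw [Real.cos_add, Real.cos_sub]; ring
  have h2 : Real.cos (2*t) = 2 * Real.cos t * Real.cos t - 1 := by
    have := cheb t t
    rw [show t + t = 2*t by ring, show t - t = 0 by ring, Real.cos_zero] at this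
    exact this
  have h3 : Real.cos (3*t) = 2 * Real.cos (2*t) * Real.cos t - Real.cos t := by
    have := cheb (2*t) t
    rw [show 2*t + t = 3*t by ring, show 2*t - t = t by ring] at this
    exact this
  have h4 : Real.cos (4*t) = 2 * Real.cos (3*t) * Real.cos t - Real.cos (2*t) := by
    have := cheb (3*t) t
    rw [show 3*t + t = 4*t by ring, show 3*t - t = 2*t by ring] at this
    exact this
  have h5 : Real.cos (5*t) = 2 * Real.cos (4*t) * Real.cos t - Real.cos (3*t) := by
    have := cheb (4*t) t
    rw [show 4*t + t = 5*t by ring, show 4*t - t = 3*t by ring] at this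
    exact this
  have h6 : Real.cos (6*t) = 2 * Real.cos (5*t) * Real.cos t - Real.cos (4*t) := by
    have := cheb (5*t) t
    rw [show 5*t + t = 6*t by ring, show 5*t - t = 4*t by ring] at this
    exact this
  have h7 : Real.cos (7*t) = 2 * Real.cos (6*t) * Real.cos t - Real.cos (5*t) := by
    have := cheb (6*t) t
    rw [show 6*t + t = 7*t by ring, show 6*t - t = 5*t by ring] at this
    exact this
  have h8 : Real.cos (8*t) = 2 * Real.cos (7*t) * Real.cos t - Real.cos (6*t) := by
    have := cheb (7*t) t
    rw [show 7*t + t = 8*t by ring, show 7*t - t = 6*t by ring] at this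
    exact this
  rw [shenSymbol, Real.sin_sq, h8, h7, h6, h5, h4, h3, h2]
  ring

lemma shen_key (t : ℝ) (ht : |t| ≤ 1/8) :
    |shenSymbol t - (-(t^2) * (1 - (57/4480) * t^6 + (1649/737280) * t^8))|
      ≤ 1800000 * |t|^11 := by
  have ht1 : |t| ≤ 1 := by linarith
  have hk : ∀ k : ℝ, 1 ≤ k → k ≤ 8 → |Real.cos (k*t) - cosP (k*t)| ≤ k^11 * |t|^11 := by
    intro k hk1 hk8
    have hkt : |k*t| ≤ 1 := by
      rw [abs_mul, abs_of_nonneg (by linarith : (0:ℝ) ≤ k)]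
      nlinarith [abs_nonneg t]
    have := cos_taylor (k*t) hkt
    rwa [abs_mul, mul_pow, abs_of_nonneg (by linarith : (0:ℝ) ≤ k)] at this
  have b1 := cos_taylor t ht1
  have b2 := hk 2 (by norm_num) (by norm_num)
  have b3 := hk 3 (by norm_num) (by norm_num)
  have b4 := hk 4 (by norm_num) (by norm_num)
  have b5 := hk 5 (by norm_num) (by norm_num)
  have b6 := hk 6 (by norm_num) (by norm_num)
  have b7 := hk 7 (by norm_num) (by norm_num)
  have b8 := hk 8 (by norm_num) (by norm_num)
  have hdecomp : shenSymbol t - (-(t^2) * (1 - (57/4480) * t^6 + (1649/737280) * t^8))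
      = (31895/65536) * (Real.cos t - cosP t)
      + (333251/307200) * (Real.cos (2*t) - cosP (2*t))
      - (774123/1638400) * (Real.cos (3*t) - cosP (3*t))
      + (26711/245760) * (Real.cos (4*t) - cosP (4*t))
      - (2779/196608) * (Real.cos (5*t) - cosP (5*t))
      + (223/184320) * (Real.cos (6*t) - cosP (6*t))
      - (281/4915200) * (Real.cos (7*t) - cosP (7*t))
      + (3/1638400) * (Real.cos (8*t) - cosP (8*t)) := by
    rw [shen_fourier t]
    simp only [cosP]
    ring
  rw [hdecomp]
  rw [abs_le] at b1 b2 b3 b4 b5 b6 b7 b8 ⊢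
  obtain ⟨b1a, b1b⟩ := b1; obtain ⟨b2a, b2b⟩ := b2; obtain ⟨b3a, b3b⟩ := b3
  obtain ⟨b4a, b4b⟩ := b4; obtain ⟨b5a, b5b⟩ := b5; obtain ⟨b6a, b6b⟩ := b6
  obtain ⟨b7a, b7b⟩ := b7; obtain ⟨b8a, b8b⟩ := b8
  constructor <;> nlinarith [abs_nonneg t, pow_nonneg (abs_nonneg t) 11]

/-- Taylor expansion of Shen's symbol,
`F(t) = −t²[1 − (57/4480)t⁶ + (1649/737280)t⁸ + O(t⁹)]`; in particular
`F(t) + t² = O(t⁸)`, so Shen's scheme is sixth-order accurate. -/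
theorem shenSymbol_taylor :
    ((fun t : ℝ => shenSymbol t
        - (-(t^2) * (1 - (57/4480) * t^6 + (1649/737280) * t^8)))
      =O[𝓝 0] fun t : ℝ => t^2 * t^9)
    ∧ ((fun t : ℝ => shenSymbol t + t^2) =O[𝓝 0] fun t : ℝ => t^8) := by
  have habs : ∀ t : ℝ, |t^2 * t^9| = |t|^11 := by
    intro t
    rw [abs_mul, abs_pow, abs_pow, ← pow_add]
  have h1 : (fun t : ℝ => shenSymbol t
        - (-(t^2) * (1 - (57/4480) * t^6 + (1649/737280) * t^8)))
      =O[𝓝 0] fun t : ℝ => t^2 * t^9 := by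
    rw [isBigO_iff]
    refine ⟨1800000, ?_⟩
    filter_upwards [Metric.ball_mem_nhds (0:ℝ) (by norm_num : (0:ℝ) < 1/8)] with t ht
    rw [Metric.mem_ball, Real.dist_eq, sub_zero] at ht
    rw [Real.norm_eq_abs, Real.norm_eq_abs, habs]
    exact shen_key t ht.le
  refine ⟨h1, ?_⟩
  have h2 : (fun t : ℝ => t^2 * t^9) =O[𝓝 0] fun t : ℝ => t^8 := by
    rw [isBigO_iff]
    refine ⟨1, ?_⟩
    filter_upwards [Metric.ball_mem_nhds (0:ℝ) (by norm_num : (0:ℝ) < 1)] with t ht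
    rw [Metric.mem_ball, Real.dist_eq, sub_zero] at ht
    rw [Real.norm_eq_abs, Real.norm_eq_abs, habs, one_mul, abs_pow]
    exact pow_le_pow_of_le_one (abs_nonneg t) ht.le (by norm_num)
  have h3 : (fun t : ℝ => t^10) =O[𝓝 0] fun t : ℝ => t^8 := by
    rw [isBigO_iff]
    refine ⟨1, ?_⟩
    filter_upwards [Metric.ball_mem_nhds (0:ℝ) (by norm_num : (0:ℝ) < 1)] with t ht
    rw [Metric.mem_ball, Real.dist_eq, sub_zero] at ht
    rw [Real.norm_eq_abs, Real.norm_eq_abs, one_mul, abs_pow, abs_pow]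
    exact pow_le_pow_of_le_one (abs_nonneg t) ht.le (by norm_num)
  have heq : (fun t : ℝ => shenSymbol t + t^2)
      = fun t : ℝ => (shenSymbol t
          - (-(t^2) * (1 - (57/4480) * t^6 + (1649/737280) * t^8)))
        + ((57/4480) * t^8 - (1649/737280) * t^10) := by
    funext t; ring
  rw [heq]
  exact (h1.trans h2).add
    ((((isBigO_refl (fun t : ℝ => t^8) (𝓝 0)).const_mul_left (57/4480)).sub
      (h3.const_mul_left (1649/737280))))
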